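/- Let a < b be real numbers and let f : ℝ → ℝ be continuously differentiable on [a,b]. Then f is monotone increasing on [a,b] if and only if D^α_{*a} f(t) ≥ 0 for all t ∈ [a,b] and all α ∈ (0,1). -/

import Mathlib

/-!
If `f` is monotone then `f' ≥ 0` on `(a, b)`, so the Caputo integrand is nonnegative. Conversely,
as `α → 1⁻` the kernel `(1 - α) (t - s) ^ (-α)` on `[a, t]` concentrates at `s = t`: for
`a ≤ u < t` and `|f'| ≤ M`, the part over `[a, u]` contributes at most
`M ((t - a) ^ (1 - α) - (t - u) ^ (1 - α)) → 0`, and the part over `[u, t]` at most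
`(sup_{(u, t)} f') (t - u) ^ (1 - α) → sup_{(u, t)} f'`. So if `f'(t) < 0`, the Caputo
derivatives at `t` are negative for `α` close to `1`.
-/

/-- The Caputo fractional derivative of order `α` with starting point `a`:
`D^α_{*a} f(t) = (1/Γ(1-α)) ∫_a^t (t-s)^(-α) f'(s) ds`. -/
noncomputable def caputoDeriv (a α : ℝ) (f : ℝ → ℝ) (t : ℝ) : ℝ :=
  (Real.Gamma (1 - α))⁻¹ * ∫ s in a..t, (t - s) ^ (-α) * deriv f s

open MeasureTheory Set Filter Topology
open scoped Interval

lemma intervalIntegrable_sub_rpow_neg (t c d : ℝ) {α : ℝ} (hα : α < 1) :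
    IntervalIntegrable (fun s => (t - s) ^ (-α)) volume c d := by
  simpa using (intervalIntegral.intervalIntegrable_rpow' (a := t - c) (b := t - d)
    (by linarith)).comp_sub_left t

lemma integral_sub_rpow_neg (t c d : ℝ) {α : ℝ} (hα : α < 1) :
    ∫ s in c..d, (t - s) ^ (-α) = ((t - c) ^ (1 - α) - (t - d) ^ (1 - α)) / (1 - α) := by
  rw [intervalIntegral.integral_comp_sub_left (fun u => u ^ (-α)) t,
    integral_rpow (Or.inl (by linarith))]
  ring_nf

lemma intervalIntegrable_sub_rpow_neg_mul {g : ℝ → ℝ} {a t α M : ℝ} (hat : a ≤ t) (hα : α < 1)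
    (hg : AEStronglyMeasurable g) (hM : ∀ s ∈ Ioo a t, |g s| ≤ M) :
    IntervalIntegrable (fun s => (t - s) ^ (-α) * g s) volume a t := by
  rw [intervalIntegrable_iff_integrableOn_Ioo_of_le hat]
  exact ((intervalIntegrable_iff_integrableOn_Ioo_of_le hat).1
    (intervalIntegrable_sub_rpow_neg t a t hα)).mul_bdd (c := M) hg.restrict
    (ae_restrict_of_forall_mem measurableSet_Ioo hM)

lemma integral_sub_rpow_neg_mul_nonneg {g : ℝ → ℝ} {a t : ℝ} (α : ℝ) (hat : a ≤ t)
    (hg : ∀ s ∈ Ioo a t, 0 ≤ g s) : 0 ≤ ∫ s in a..t, (t - s) ^ (-α) * g s := by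
  rw [intervalIntegral.integral_of_le hat, integral_Ioc_eq_integral_Ioo]
  exact setIntegral_nonneg measurableSet_Ioo fun s hs =>
    mul_nonneg (Real.rpow_nonneg (sub_nonneg.2 hs.2.le) _) (hg s hs)

lemma integral_sub_rpow_neg_mul_le {g : ℝ → ℝ} {a u t α M c : ℝ} (hau : a ≤ u) (hut : u ≤ t)
    (hα : α < 1) (hg : AEStronglyMeasurable g) (hM : ∀ s ∈ Ioo a t, |g s| ≤ M)
    (hc : ∀ s ∈ Ioo u t, g s ≤ c) :
    ∫ s in a..t, (t - s) ^ (-α) * g s ≤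
      (M * ((t - a) ^ (1 - α) - (t - u) ^ (1 - α)) + c * (t - u) ^ (1 - α)) / (1 - α) := by
  have hint := intervalIntegrable_sub_rpow_neg_mul (hau.trans hut) hα hg hM
  have hu : u ∈ [[a, t]] := mem_uIcc_of_le hau hut
  have hker : ∀ s ∈ Ioo a t, 0 ≤ (t - s) ^ (-α) := fun s hs =>
    Real.rpow_nonneg (sub_nonneg.2 hs.2.le) _
  have hleft : ∫ s in a..u, (t - s) ^ (-α) * g s ≤ ∫ s in a..u, M * (t - s) ^ (-α) :=
    intervalIntegral.integral_mono_on_of_le_Ioo hau (hint.mono_set (uIcc_subset_uIcc_left hu))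
      ((intervalIntegrable_sub_rpow_neg t a u hα).const_mul M) fun s hs => by
        have hs' : s ∈ Ioo a t := ⟨hs.1, hs.2.trans_le hut⟩
        rw [mul_comm M]
        exact mul_le_mul_of_nonneg_left ((le_abs_self _).trans (hM s hs')) (hker s hs')
  have hright : ∫ s in u..t, (t - s) ^ (-α) * g s ≤ ∫ s in u..t, c * (t - s) ^ (-α) :=
    intervalIntegral.integral_mono_on_of_le_Ioo hut (hint.mono_set (uIcc_subset_uIcc_right hu))
      ((intervalIntegrable_sub_rpow_neg t u t hα).const_mul c) fun s hs => by
        rw [mul_comm c]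
        exact mul_le_mul_of_nonneg_left (hc s hs) (hker s ⟨hau.trans_lt hs.1, hs.2⟩)
  calc ∫ s in a..t, (t - s) ^ (-α) * g s
      = (∫ s in a..u, (t - s) ^ (-α) * g s) + ∫ s in u..t, (t - s) ^ (-α) * g s :=
        (intervalIntegral.integral_add_adjacent_intervals
          (hint.mono_set (uIcc_subset_uIcc_left hu))
          (hint.mono_set (uIcc_subset_uIcc_right hu))).symm
    _ ≤ (∫ s in a..u, M * (t - s) ^ (-α)) + ∫ s in u..t, c * (t - s) ^ (-α) :=
        add_le_add hleft hright
    _ = _ := by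
        rw [intervalIntegral.integral_const_mul, intervalIntegral.integral_const_mul,
          integral_sub_rpow_neg t _ _ hα, integral_sub_rpow_neg t _ _ hα, sub_self,
          Real.zero_rpow (by linarith)]
        ring

lemma nonneg_of_forall_integral_sub_rpow_neg_mul_nonneg {g : ℝ → ℝ} {a t M : ℝ} (hat : a < t)
    (hg : AEStronglyMeasurable g) (hM : ∀ s ∈ Ioo a t, |g s| ≤ M)
    (hgt : ContinuousWithinAt g (Iic t) t)
    (h : ∀ α ∈ Ioo (0 : ℝ) 1, 0 ≤ ∫ s in a..t, (t - s) ^ (-α) * g s) : 0 ≤ g t := by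
  by_contra! hneg
  obtain ⟨l, hlt, hl⟩ := mem_nhdsLE_iff_exists_Ioc_subset.1
    (hgt.eventually_lt_const (by linarith : g t < g t / 2))
  have hut : max a l < t := max_lt hat hlt
  have hc : ∀ s ∈ Ioo (max a l) t, g s ≤ g t / 2 := fun s hs =>
    (hl ⟨(le_max_right a l).trans_lt hs.1, hs.2.le⟩).le
  have hbound : Tendsto (fun α : ℝ => M * ((t - a) ^ (1 - α) - (t - max a l) ^ (1 - α)) +
      g t / 2 * (t - max a l) ^ (1 - α)) (𝓝[<] 1) (𝓝 (g t / 2)) := by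
    have hta : t - a ≠ 0 := (sub_pos.2 hat).ne'
    have htu : t - max a l ≠ 0 := (sub_pos.2 hut).ne'
    have : ContinuousAt (fun α : ℝ => M * ((t - a) ^ (1 - α) - (t - max a l) ^ (1 - α)) +
        g t / 2 * (t - max a l) ^ (1 - α)) 1 := by
      fun_prop (disch := assumption)
    simpa using this.tendsto.mono_left nhdsWithin_le_nhds
  obtain ⟨α, hα_neg, hα⟩ := ((hbound.eventually_lt_const (by linarith : g t / 2 < 0)).and
    (Ioo_mem_nhdsLT zero_lt_one)).exists
  have := (h α hα).trans (integral_sub_rpow_neg_mul_le (le_max_left a l) hut.le hα.2 hg hM hc)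
  exact (div_neg_of_neg_of_pos hα_neg (by linarith [hα.2])).not_ge this

lemma MonotoneOn.deriv_nonneg_of_mem_nhds {f : ℝ → ℝ} {D : Set ℝ} {x : ℝ} (hf : MonotoneOn f D)
    (hx : D ∈ 𝓝 x) : 0 ≤ deriv f x := by
  rw [← derivWithin_of_mem_nhds hx]
  exact hf.derivWithin_nonneg

lemma ContDiffOn.exists_abs_deriv_le_Icc {f : ℝ → ℝ} {a b : ℝ} (hab : a < b)
    (hf : ContDiffOn ℝ 1 f (Icc a b)) : ∃ M, ∀ s ∈ Ioo a b, |deriv f s| ≤ M := by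
  obtain ⟨M, hM⟩ := isCompact_Icc.exists_bound_of_continuousOn
    (hf.continuousOn_derivWithin (uniqueDiffOn_Icc hab) le_rfl)
  refine ⟨M, fun s hs => ?_⟩
  rw [← derivWithin_of_mem_nhds (Icc_mem_nhds hs.1 hs.2)]
  exact hM s (Ioo_subset_Icc_self hs)

lemma caputoDeriv_nonneg_iff {a α : ℝ} (hα : α < 1) (f : ℝ → ℝ) (t : ℝ) :
    0 ≤ caputoDeriv a α f t ↔ 0 ≤ ∫ s in a..t, (t - s) ^ (-α) * deriv f s :=
  mul_nonneg_iff_of_pos_left (inv_pos.2 (Real.Gamma_pos_of_pos (sub_pos.2 hα)))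

theorem monotoneOn_iff_caputo_nonneg_general (a b : ℝ) (f : ℝ → ℝ)
    (hf : ContDiffOn ℝ 1 f (Set.Icc a b)) :
    MonotoneOn f (Set.Icc a b) ↔
      ∀ t ∈ Set.Icc a b, ∀ α ∈ Set.Ioo (0 : ℝ) 1, 0 ≤ caputoDeriv a α f t := by
  constructor
  · intro hmono t ht α hα
    rw [caputoDeriv_nonneg_iff hα.2]
    exact integral_sub_rpow_neg_mul_nonneg α ht.1 fun s hs =>
      hmono.deriv_nonneg_of_mem_nhds (Icc_mem_nhds hs.1 (hs.2.trans_le ht.2))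
  · intro hcaputo
    have hdiff : DifferentiableOn ℝ f (Ioo a b) :=
      (hf.differentiableOn one_ne_zero).mono Ioo_subset_Icc_self
    refine monotoneOn_of_deriv_nonneg (convex_Icc a b) hf.continuousOn
      (by rwa [interior_Icc]) fun t ht => ?_
    rw [interior_Icc] at ht
    obtain ⟨M, hM⟩ := hf.exists_abs_deriv_le_Icc (ht.1.trans ht.2)
    have hcont : ContinuousAt (deriv f) t :=
      ((hf.mono Ioo_subset_Icc_self).continuousOn_deriv_of_isOpen isOpen_Ioo le_rfl).continuousAt
        (isOpen_Ioo.mem_nhds ht)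
    exact nonneg_of_forall_integral_sub_rpow_neg_mul_nonneg ht.1
      (measurable_deriv f).aestronglyMeasurable (fun s hs => hM s ⟨hs.1, hs.2.trans ht.2⟩)
      hcont.continuousWithinAt fun α hα =>
        (caputoDeriv_nonneg_iff hα.2 f t).1 (hcaputo t (Ioo_subset_Icc_self ht) α hα)

theorem monotoneOn_iff_caputo_nonneg (a b : ℝ) (hab : a < b) (f : ℝ → ℝ)
    (hf : ContDiffOn ℝ 1 f (Set.Icc a b)) :
    MonotoneOn f (Set.Icc a b) ↔
      ∀ t ∈ Set.Icc a b, ∀ α ∈ Set.Ioo (0 : ℝ) 1, 0 ≤ caputoDeriv a α f t :=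
  monotoneOn_iff_caputo_nonneg_general a b f hf
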